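/- arXiv:2507.06114 — 2 statements merged into one kernel-verified Lean document; each statement's English description precedes it below -/
import Mathlib

section
/- (Regularization stability.) Let α > 0, y^δ ∈ Y, and let S, S_k ⊆ Ω be measurable sets such that the weight functions f_{S_k,α} converge to f_{S,α} in L²(Ω), where f_{T,α}(λ) := √α for λ ∈ T and f_{T,α}(λ) := 1 for λ ∈ Ω∖T. For each k let x_k ∈ D(F) be a minimizer of J_{α,S_k,y^δ} over D(F). Then (x_k) has a subsequence converging strongly in L²(Ω), and every strong limit of a convergent subsequence of (x_k) is a minimizer of J_{α,S,y^δ} over D(F). -/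
open MeasureTheory Filter
open scoped RealInnerProductSpace ENNReal Topology Classical

noncomputable section

/-- Weak sequential convergence in a real inner product space. -/
def WeakConv {H : Type*} [NormedAddCommGroup H] [InnerProductSpace ℝ H]
    (u : ℕ → H) (x : H) : Prop :=
  ∀ z : H, Tendsto (fun k => ⟪u k, z⟫) atTop (𝓝 ⟪x, z⟫)

/-- The squared `L²` mass of (a representative of) `x : L²(Ω)` over the set `T`. -/
def sqInt {n : ℕ} (Ω : Set (Fin n → ℝ)) (T : Set (Fin n → ℝ))
    (x : Lp ℝ 2 (volume.restrict Ω)) : ℝ :=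
  ∫ t in T, (x t) ^ 2 ∂(volume.restrict Ω)

/-- The Tikhonov-type functional
`J_{α,S,z}(x) = ‖F(x) − z‖² + α‖x − x*‖_{S⁺}² + ‖x − x*‖_{S⁻}²`. -/
def J {n : ℕ} (Ω : Set (Fin n → ℝ)) {Y : Type*} [NormedAddCommGroup Y]
    [InnerProductSpace ℝ Y]
    (F : Lp ℝ 2 (volume.restrict Ω) → Y) (xstar : Lp ℝ 2 (volume.restrict Ω))
    (α : ℝ) (S : Set (Fin n → ℝ)) (z : Y) (x : Lp ℝ 2 (volume.restrict Ω)) : ℝ :=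
  ‖F x - z‖ ^ 2 + (α * sqInt Ω S (x - xstar) + sqInt Ω (Ω \ S) (x - xstar))

/-- `x` is a minimizer of the functional `Jf` over the set `D`. -/
def IsMinimizer {X' : Type*} (Jf : X' → ℝ) (D : Set X') (x : X') : Prop :=
  x ∈ D ∧ ∀ x' ∈ D, Jf x ≤ Jf x'

/-- The weight function `f_{T,α}`, equal to `√α` on `T` and `1` off `T`. -/
def weight {n : ℕ} (α : ℝ) (T : Set (Fin n → ℝ)) : (Fin n → ℝ) → ℝ :=
  fun t => if t ∈ T then Real.sqrt α else 1

/-!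
Minimality against a fixed point of `D` bounds `x_k` and `F x_k`, because multiplication by
`f_{S_k,α}` is bounded below by `min √α 1` and converges strongly to multiplication by `f_{S,α}`
on `L²` (the weights differ by `|√α - 1|` exactly on `S_k ∆ S`, whose measure tends to `0`).
Hence weakly convergent subsequences exist, and the weak closedness of `F` puts their limit `x̄`
in `D` with `F x_k ⇀ F x̄`. Minimality against `x̄` bounds `‖F x_k - y‖² + ‖f_{S_k,α} (x_k - x*)‖²`
by `J_k(x̄) → J(x̄)`, which together with the weak convergence of both terms forces their norm
convergence; the lower bound on the weights then gives `x_k → x̄`, and `x̄` is a minimizer of `J`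
since `J_k(x_k) ≤ J_k(x')` passes to the limit.
-/

section WeakConvergence
variable {H : Type*} [NormedAddCommGroup H] [InnerProductSpace ℝ H] {u : ℕ → H} {x : H}

theorem Filter.Tendsto.weakConv (h : Tendsto u atTop (𝓝 x)) : WeakConv u x :=
  fun _ => h.inner tendsto_const_nhds

theorem WeakConv.comp {φ : ℕ → ℕ} (h : WeakConv u x) (hφ : StrictMono φ) :
    WeakConv (u ∘ φ) x :=
  fun z => (h z).comp hφ.tendsto_atTop

theorem WeakConv.sub_const (h : WeakConv u x) (c : H) :
    WeakConv (fun k => u k - c) (x - c) := fun z => by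
  simpa only [inner_sub_left] using (h z).sub_const ⟪c, z⟫

theorem WeakConv.map_of_isSymmetric {A : ℕ → H →ₗ[ℝ] H} {B : H →ₗ[ℝ] H}
    (hA : ∀ k, (A k).IsSymmetric) (hB : B.IsSymmetric)
    (hAB : ∀ v, Tendsto (fun k => A k v) atTop (𝓝 (B v))) (h : WeakConv u x) {C : ℝ}
    (hu : ∀ k, ‖u k‖ ≤ C) : WeakConv (fun k => A k (u k)) (B x) := by
  intro z
  have hsplit (k : ℕ) : ⟪A k (u k), z⟫ = ⟪u k, B z⟫ + ⟪u k, A k z - B z⟫ := by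
    rw [hA, ← inner_add_right, add_sub_cancel]
  have herr : Tendsto (fun k => ⟪u k, A k z - B z⟫) atTop (𝓝 0) := by
    refine squeeze_zero_norm (fun k => (norm_inner_le_norm _ _).trans
      (mul_le_mul_of_nonneg_right (hu k) (norm_nonneg _))) ?_
    simpa using ((hAB z).sub_const (B z)).norm.const_mul C
  simpa only [hsplit, hB x, add_zero] using (h (B z)).add herr

/-- Sequential Banach–Alaoglu in the weak dual of the separable closed span of `u`, transported
back through the Riesz isomorphism. -/
theorem exists_weakConv_subseq [CompleteSpace H] {C : ℝ} (hu : ∀ k, ‖u k‖ ≤ C) :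
    ∃ φ : ℕ → ℕ, StrictMono φ ∧ ∃ x : H, WeakConv (u ∘ φ) x := by
  set V : Submodule ℝ H := (Submodule.span ℝ (Set.range u)).topologicalClosure
  have huV (k : ℕ) : u k ∈ V :=
    Submodule.le_topologicalClosure _ (Submodule.subset_span (Set.mem_range_self k))
  have : CompleteSpace V := (Submodule.isClosed_topologicalClosure _).completeSpace_coe
  have : TopologicalSpace.SeparableSpace V := by
    refine TopologicalSpace.IsSeparable.separableSpace ?_
    rw [Submodule.topologicalClosure_coe]
    exact (Set.countable_range u).isSeparable.span.closure
  let ℓ (k : ℕ) : WeakDual ℝ V :=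
    StrongDual.toWeakDual (InnerProductSpace.toDual ℝ V ⟨u k, huV k⟩)
  have hℓ (k : ℕ) :
      ℓ k ∈ WeakDual.toStrongDual ⁻¹' Metric.closedBall (0 : StrongDual ℝ V) C := by
    change InnerProductSpace.toDual ℝ V ⟨u k, huV k⟩ ∈ Metric.closedBall (0 : StrongDual ℝ V) C
    rw [mem_closedBall_zero_iff]
    simpa using hu k
  obtain ⟨ℓ₀, -, φ, hφ, hlim⟩ := WeakDual.isSeqCompact_closedBall ℝ V 0 C hℓ
  refine ⟨φ, hφ, (InnerProductSpace.toDual ℝ V).symm (WeakDual.toStrongDual ℓ₀), fun z => ?_⟩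
  rw [← Submodule.inner_orthogonalProjectionOnto_eq_of_mem_left,
    InnerProductSpace.toDual_symm_apply]
  convert (tendsto_iff_forall_eval_tendsto_topDualPairing.mp hlim) (V.orthogonalProjectionOnto z)
    using 2
  · exact (Submodule.inner_orthogonalProjectionOnto_eq_of_mem_left ⟨_, huV _⟩ z).symm
  · rfl

end WeakConvergence

theorem tendsto_of_norm_sub_sq_le {E : Type*} [NormedAddCommGroup E] {e : ℕ → E} {e₀ : E}
    {r : ℕ → ℝ} (hr : Tendsto r atTop (𝓝 0)) (hle : ∀ k, ‖e k - e₀‖ ^ 2 ≤ r k) :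
    Tendsto e atTop (𝓝 e₀) := by
  rw [tendsto_iff_norm_sub_tendsto_zero]
  exact squeeze_zero (fun k => norm_nonneg _) (fun k => Real.le_sqrt_of_sq_le (hle k))
    (by simpa using hr.sqrt)

theorem tendsto_of_weakConv_of_norm_sq_add_le {E F : Type*} [NormedAddCommGroup E]
    [InnerProductSpace ℝ E] [NormedAddCommGroup F] [InnerProductSpace ℝ F]
    {p : ℕ → E} {p₀ : E} {q : ℕ → F} {q₀ : F} (hp : WeakConv p p₀) (hq : WeakConv q q₀)
    {b : ℕ → ℝ} (hb : ∀ k, ‖p k‖ ^ 2 + ‖q k‖ ^ 2 ≤ b k)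
    (hb₀ : Tendsto b atTop (𝓝 (‖p₀‖ ^ 2 + ‖q₀‖ ^ 2))) :
    Tendsto p atTop (𝓝 p₀) ∧ Tendsto q atTop (𝓝 q₀) := by
  have hlim := ((hb₀.sub ((hp p₀).const_mul 2)).sub ((hq q₀).const_mul 2)).add_const
    (‖p₀‖ ^ 2 + ‖q₀‖ ^ 2)
  rw [real_inner_self_eq_norm_sq, real_inner_self_eq_norm_sq] at hlim
  have hsum : Tendsto (fun k => ‖p k - p₀‖ ^ 2 + ‖q k - q₀‖ ^ 2) atTop (𝓝 0) := by
    refine squeeze_zero (fun k => by positivity) (fun k => ?_) (by convert hlim using 2; ring)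
    rw [norm_sub_sq_real, norm_sub_sq_real]
    linarith [hb k]
  exact ⟨tendsto_of_norm_sub_sq_le hsum fun k => le_add_of_nonneg_right (sq_nonneg _),
    tendsto_of_norm_sub_sq_le hsum fun k => le_add_of_nonneg_left (sq_nonneg _)⟩

section Tikhonov
variable {H Y : Type*} [NormedAddCommGroup H] [InnerProductSpace ℝ H] [NormedAddCommGroup Y]
  {G : H → Y} {y : Y} {x₀ : H} {D : Set H}
  {A : ℕ → H →ₗ[ℝ] H} {B : H →ₗ[ℝ] H} {xs : ℕ → H} {c : ℝ} {x₁ : H}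

def tikhonov (G : H → Y) (y : Y) (x₀ : H) (A : H →ₗ[ℝ] H) (x : H) : ℝ :=
  ‖G x - y‖ ^ 2 + ‖A (x - x₀)‖ ^ 2

theorem tendsto_tikhonov (hAB : ∀ v, Tendsto (fun k => A k v) atTop (𝓝 (B v))) (x : H) :
    Tendsto (fun k => tikhonov G y x₀ (A k) x) atTop (𝓝 (tikhonov G y x₀ B x)) :=
  tendsto_const_nhds.add ((hAB (x - x₀)).norm.pow 2)

theorem exists_norm_le_of_isMinimizer_tikhonov
    (hAB : ∀ v, Tendsto (fun k => A k v) atTop (𝓝 (B v))) (hc : 0 < c)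
    (hAc : ∀ k u, c * ‖u‖ ≤ ‖A k u‖) (hxs : ∀ k, IsMinimizer (tikhonov G y x₀ (A k)) D (xs k))
    (hx₁ : x₁ ∈ D) :
    ∃ C, ∀ k, ‖xs k - x₀‖ ≤ C ∧ ‖G (xs k) - y‖ ≤ C := by
  obtain ⟨M, hM⟩ := (tendsto_tikhonov (G := G) (y := y) (x₀ := x₀) hAB x₁).bddAbove_range
  have hle (k : ℕ) : ‖G (xs k) - y‖ ^ 2 + ‖A k (xs k - x₀)‖ ^ 2 ≤ M :=
    ((hxs k).2 x₁ hx₁).trans (hM ⟨k, rfl⟩)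
  refine ⟨max (√M / c) √M, fun k => ⟨le_max_of_le_left ?_, le_max_of_le_right ?_⟩⟩
  · rw [le_div_iff₀' hc]
    exact (hAc k _).trans (Real.le_sqrt_of_sq_le (by linarith [sq_nonneg ‖G (xs k) - y‖, hle k]))
  · exact Real.le_sqrt_of_sq_le (by linarith [sq_nonneg ‖A k (xs k - x₀)‖, hle k])

theorem tendsto_and_isMinimizer_of_weakConv [InnerProductSpace ℝ Y]
    (hA : ∀ k, (A k).IsSymmetric) (hB : B.IsSymmetric)
    (hAB : ∀ v, Tendsto (fun k => A k v) atTop (𝓝 (B v))) (hc : 0 < c)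
    (hAc : ∀ k u, c * ‖u‖ ≤ ‖A k u‖) (hxs : ∀ k, IsMinimizer (tikhonov G y x₀ (A k)) D (xs k))
    {x : H} (hxD : x ∈ D) (hx : WeakConv xs x) (hGx : WeakConv (fun k => G (xs k)) (G x)) :
    Tendsto xs atTop (𝓝 x) ∧ IsMinimizer (tikhonov G y x₀ B) D x := by
  obtain ⟨C, hC⟩ := exists_norm_le_of_isMinimizer_tikhonov hAB hc hAc hxs hxD
  have hres := tendsto_of_weakConv_of_norm_sq_add_le (hGx.sub_const y)
    ((hx.sub_const x₀).map_of_isSymmetric hA hB hAB fun k => (hC k).1)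
    (fun k => (hxs k).2 x hxD) (tendsto_tikhonov hAB x)
  have hconv : Tendsto xs atTop (𝓝 x) := by
    rw [tendsto_iff_norm_sub_tendsto_zero]
    have hdiff : Tendsto (fun k => c⁻¹ * ‖A k (xs k - x₀) - A k (x - x₀)‖) atTop (𝓝 0) := by
      simpa using ((hres.2.sub (hAB (x - x₀))).norm.const_mul c⁻¹)
    refine squeeze_zero (fun k => norm_nonneg _) (fun k => ?_) hdiff
    rw [← map_sub, sub_sub_sub_cancel_right, le_inv_mul_iff₀ hc]
    exact hAc k _
  refine ⟨hconv, hxD, fun x' hx' => le_of_tendsto_of_tendsto' ?_ (tendsto_tikhonov hAB x')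
    fun k => (hxs k).2 x' hx'⟩
  exact (hres.1.norm.pow 2).add (hres.2.norm.pow 2)

theorem exists_subseq_tendsto_isMinimizer_of_weakConv [InnerProductSpace ℝ Y] [CompleteSpace Y]
    (hGD : ∀ (u : ℕ → H) (x : H) (z : Y), (∀ k, u k ∈ D) → WeakConv u x →
      WeakConv (fun k => G (u k)) z → x ∈ D ∧ G x = z)
    (hA : ∀ k, (A k).IsSymmetric) (hB : B.IsSymmetric)
    (hAB : ∀ v, Tendsto (fun k => A k v) atTop (𝓝 (B v))) (hc : 0 < c)
    (hAc : ∀ k u, c * ‖u‖ ≤ ‖A k u‖) (hxs : ∀ k, IsMinimizer (tikhonov G y x₀ (A k)) D (xs k))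
    (hx₁ : x₁ ∈ D) {ψ : ℕ → ℕ} (hψ : StrictMono ψ) {x : H} (hx : WeakConv (xs ∘ ψ) x) :
    ∃ φ : ℕ → ℕ, StrictMono φ ∧ Tendsto (xs ∘ ψ ∘ φ) atTop (𝓝 x) ∧
      IsMinimizer (tikhonov G y x₀ B) D x := by
  obtain ⟨C, hC⟩ := exists_norm_le_of_isMinimizer_tikhonov hAB hc hAc hxs hx₁
  obtain ⟨φ, hφ, z, hz⟩ := exists_weakConv_subseq (u := fun k => G (xs (ψ k)))
    fun k => (norm_le_norm_add_norm_sub' _ y).trans (add_le_add_right (hC (ψ k)).2 _)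
  obtain ⟨hxD, rfl⟩ := hGD _ x z (fun k => (hxs _).1) (hx.comp hφ) hz
  exact ⟨φ, hφ, tendsto_and_isMinimizer_of_weakConv (A := fun k => A (ψ (φ k)))
    (fun k => hA _) hB (fun v => (hAB v).comp (hψ.comp hφ).tendsto_atTop) hc (fun k => hAc _)
    (fun k => hxs _) hxD (hx.comp hφ) hz⟩

theorem tikhonov_stability [CompleteSpace H] [InnerProductSpace ℝ Y] [CompleteSpace Y]
    (hGD : ∀ (u : ℕ → H) (x : H) (z : Y), (∀ k, u k ∈ D) → WeakConv u x →
      WeakConv (fun k => G (u k)) z → x ∈ D ∧ G x = z)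
    (hA : ∀ k, (A k).IsSymmetric) (hB : B.IsSymmetric)
    (hAB : ∀ v, Tendsto (fun k => A k v) atTop (𝓝 (B v))) (hc : 0 < c)
    (hAc : ∀ k u, c * ‖u‖ ≤ ‖A k u‖) (hxs : ∀ k, IsMinimizer (tikhonov G y x₀ (A k)) D (xs k))
    (hx₁ : x₁ ∈ D) :
    (∃ φ : ℕ → ℕ, StrictMono φ ∧ ∃ x : H, Tendsto (xs ∘ φ) atTop (𝓝 x)) ∧
    ∀ φ : ℕ → ℕ, StrictMono φ → ∀ x : H, Tendsto (xs ∘ φ) atTop (𝓝 x) →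
      IsMinimizer (tikhonov G y x₀ B) D x := by
  refine ⟨?_, fun ψ hψ x hx =>
    (exists_subseq_tendsto_isMinimizer_of_weakConv hGD hA hB hAB hc hAc hxs hx₁ hψ
      hx.weakConv).choose_spec.2.2⟩
  obtain ⟨C, hC⟩ := exists_norm_le_of_isMinimizer_tikhonov hAB hc hAc hxs hx₁
  obtain ⟨ψ, hψ, x, hx⟩ := exists_weakConv_subseq (u := xs)
    fun k => (norm_le_norm_add_norm_sub' _ x₀).trans (add_le_add_right (hC k).1 _)
  obtain ⟨φ, hφ, hconv, -⟩ :=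
    exists_subseq_tendsto_isMinimizer_of_weakConv hGD hA hB hAB hc hAc hxs hx₁ hψ hx
  exact ⟨ψ ∘ φ, hψ.comp hφ, x, hconv⟩

end Tikhonov

section MulL2
variable {X : Type*} [MeasurableSpace X] {μ : Measure X}

def mulL2 : Lp ℝ ∞ μ →ₗ[ℝ] Lp ℝ 2 μ →ₗ[ℝ] Lp ℝ 2 μ :=
  (ContinuousLinearMap.mul ℝ ℝ).holderₗ μ ∞ 2 2

theorem coeFn_mulL2 (f : Lp ℝ ∞ μ) (u : Lp ℝ 2 μ) : mulL2 f u =ᵐ[μ] fun x => f x * u x :=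
  (ContinuousLinearMap.mul ℝ ℝ).coeFn_holder f u

theorem norm_sq_eq_integral_sq (u : Lp ℝ 2 μ) : ‖u‖ ^ 2 = ∫ x, u x ^ 2 ∂μ := by
  rw [← real_inner_self_eq_norm_sq, L2.inner_def]
  simp [sq]

theorem norm_mulL2_sq (f : Lp ℝ ∞ μ) (u : Lp ℝ 2 μ) :
    ‖mulL2 f u‖ ^ 2 = ∫ x, (f x * u x) ^ 2 ∂μ := by
  rw [norm_sq_eq_integral_sq]
  exact integral_congr_ae ((coeFn_mulL2 f u).mono fun x hx => by simp only [hx])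

theorem isSymmetric_mulL2 (f : Lp ℝ ∞ μ) : (mulL2 f).IsSymmetric := fun u v => by
  rw [L2.inner_def, L2.inner_def]
  refine integral_congr_ae ?_
  filter_upwards [coeFn_mulL2 f u, coeFn_mulL2 f v] with x hu hv
  simp only [hu, hv, RCLike.inner_apply, conj_trivial]
  ring

theorem mul_norm_le_norm_mulL2 {f : Lp ℝ ∞ μ} {c : ℝ} (hc : 0 ≤ c) (hf : ∀ᵐ x ∂μ, c ≤ |f x|)
    (u : Lp ℝ 2 μ) : c * ‖u‖ ≤ ‖mulL2 f u‖ := by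
  rw [← abs_of_nonneg hc, ← Real.norm_eq_abs, ← norm_smul]
  refine Lp.norm_le_norm_of_ae_le ?_
  filter_upwards [Lp.coeFn_smul c u, coeFn_mulL2 f u, hf] with x hcu hfu hfx
  rw [hcu, hfu, Pi.smul_apply, norm_smul, norm_mul, Real.norm_eq_abs, Real.norm_eq_abs,
    abs_of_nonneg hc]
  exact mul_le_mul_of_nonneg_right hfx (abs_nonneg _)

end MulL2

section Weight
variable {n : ℕ} {μ : Measure (Fin n → ℝ)} {α : ℝ} {S T : Set (Fin n → ℝ)}

theorem memLp_weight (hT : MeasurableSet T) : MemLp (weight α T) ∞ μ :=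
  memLp_top_of_bound (Measurable.ite hT measurable_const measurable_const).aestronglyMeasurable
    (max √α 1) (Eventually.of_forall fun t => by
      unfold weight; split_ifs <;> simp [abs_of_nonneg (Real.sqrt_nonneg α)])

def weightLp (μ : Measure (Fin n → ℝ)) (α : ℝ) (hT : MeasurableSet T) : Lp ℝ ∞ μ :=
  (memLp_weight hT).toLp (weight α T)

theorem coeFn_weightLp (μ : Measure (Fin n → ℝ)) (α : ℝ) (hT : MeasurableSet T) :
    weightLp μ α hT =ᵐ[μ] weight α T :=
  MemLp.coeFn_toLp _

theorem min_le_abs_weight (t : Fin n → ℝ) : min √α 1 ≤ |weight α T t| := by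
  unfold weight; split_ifs <;> simp [abs_of_nonneg (Real.sqrt_nonneg α)]

theorem abs_weight_sub_weight (t : Fin n → ℝ) :
    |weight α T t - weight α S t| = (symmDiff T S).indicator (fun _ => |√α - 1|) t := by
  unfold weight
  by_cases hT : t ∈ T <;> by_cases hS : t ∈ S <;> simp [hT, hS, Set.mem_symmDiff, abs_sub_comm]

theorem tendsto_measure_symmDiff_of_tendsto_eLpNorm (hα : √α ≠ 1) {Sk : ℕ → Set (Fin n → ℝ)}
    (hSk : ∀ k, MeasurableSet (Sk k)) (hS : MeasurableSet S)
    (hw : Tendsto (fun k => eLpNorm (weight α (Sk k) - weight α S) 2 μ) atTop (𝓝 0)) :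
    Tendsto (fun k => μ (symmDiff (Sk k) S)) atTop (𝓝 0) := by
  have hmeas {U : Set (Fin n → ℝ)} (hU : MeasurableSet U) :
      AEStronglyMeasurable (weight α U) μ := (memLp_weight (μ := μ) hU).1
  have hlim := tendstoInMeasure_of_tendsto_eLpNorm two_ne_zero (fun k => hmeas (hSk k)) (hmeas hS)
    hw ‖√α - 1‖ₑ (by simpa [sub_eq_zero] using hα)
  refine tendsto_of_tendsto_of_tendsto_of_le_of_le tendsto_const_nhds hlim (fun _ => zero_le)
    fun k => measure_mono fun t ht => ?_
  rw [Set.mem_ofPred_eq, edist_eq_enorm_sub, Real.enorm_eq_ofReal_abs, Real.enorm_eq_ofReal_abs,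
    abs_weight_sub_weight, Set.indicator_of_mem ht]

theorem mul_norm_le_norm_mulL2_weightLp (hT : MeasurableSet T) (u : Lp ℝ 2 μ) :
    min √α 1 * ‖u‖ ≤ ‖mulL2 (weightLp μ α hT) u‖ :=
  mul_norm_le_norm_mulL2 (le_min (Real.sqrt_nonneg α) zero_le_one)
    ((coeFn_weightLp μ α hT).mono fun t ht => ht ▸ min_le_abs_weight t) u

theorem norm_mulL2_weightLp_sq (hα : 0 ≤ α) (hT : MeasurableSet T) (u : Lp ℝ 2 μ) :
    ‖mulL2 (weightLp μ α hT) u‖ ^ 2 = α * ∫ t in T, u t ^ 2 ∂μ + ∫ t in Tᶜ, u t ^ 2 ∂μ := by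
  have hae : (fun t => (weightLp μ α hT t * u t) ^ 2) =ᵐ[μ] fun t => (weight α T t * u t) ^ 2 :=
    (coeFn_weightLp μ α hT).mono fun t ht => by simp only [ht]
  have hint : Integrable (fun t => (weight α T t * u t) ^ 2) μ :=
    ((Lp.memLp (mulL2 (weightLp μ α hT) u)).integrable_sq.congr
      ((coeFn_mulL2 (weightLp μ α hT) u).mono fun t ht => by simp only [ht])).congr hae
  rw [norm_mulL2_sq, integral_congr_ae hae, ← integral_add_compl hT hint,
    ← integral_const_mul]
  congr 1
  · refine setIntegral_congr_fun hT fun t ht => ?_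
    simp only [weight, if_pos ht, mul_pow, Real.sq_sqrt hα]
  · refine setIntegral_congr_fun hT.compl fun t ht => ?_
    simp only [weight, if_neg ht, one_mul]

theorem norm_mulL2_weightLp_sub_sq (hT : MeasurableSet T) (hS : MeasurableSet S)
    (u : Lp ℝ 2 μ) :
    ‖mulL2 (weightLp μ α hT) u - mulL2 (weightLp μ α hS) u‖ ^ 2
      = (√α - 1) ^ 2 * ∫ t in symmDiff T S, u t ^ 2 ∂μ := by
  rw [← LinearMap.sub_apply, ← map_sub, norm_mulL2_sq, ← integral_const_mul,
    ← integral_indicator (hT.symmDiff hS)]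
  refine integral_congr_ae ?_
  filter_upwards [Lp.coeFn_sub (weightLp μ α hT) (weightLp μ α hS), coeFn_weightLp μ α hT,
    coeFn_weightLp μ α hS] with t hsub hT' hS'
  rw [hsub, Pi.sub_apply, hT', hS', mul_pow, ← sq_abs, abs_weight_sub_weight]
  by_cases ht : t ∈ symmDiff T S
  · simp [Set.indicator_of_mem ht]
  · simp [Set.indicator_of_notMem ht]

theorem tendsto_mulL2_weightLp {Sk : ℕ → Set (Fin n → ℝ)} (hSk : ∀ k, MeasurableSet (Sk k))
    (hS : MeasurableSet S)
    (hw : Tendsto (fun k => eLpNorm (weight α (Sk k) - weight α S) 2 μ) atTop (𝓝 0))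
    (u : Lp ℝ 2 μ) :
    Tendsto (fun k => mulL2 (weightLp μ α (hSk k)) u) atTop (𝓝 (mulL2 (weightLp μ α hS) u)) := by
  refine tendsto_of_norm_sub_sq_le ?_ fun k => (norm_mulL2_weightLp_sub_sq (hSk k) hS u).le
  by_cases hα : √α = 1
  · simp [hα]
  · simpa using ((Lp.memLp u).integrable_sq.tendsto_setIntegral_nhds_zero
      (tendsto_measure_symmDiff_of_tendsto_eLpNorm hα hSk hS hw)).const_mul ((√α - 1) ^ 2)

end Weight

theorem J_eq_tikhonov {n : ℕ} {Ω : Set (Fin n → ℝ)} {Y : Type*} [NormedAddCommGroup Y]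
    [InnerProductSpace ℝ Y] (F : Lp ℝ 2 (volume.restrict Ω) → Y)
    (xstar : Lp ℝ 2 (volume.restrict Ω)) {α : ℝ} (hα : 0 ≤ α) {S : Set (Fin n → ℝ)}
    (hS : MeasurableSet S) (z : Y) :
    J Ω F xstar α S z = tikhonov F z xstar (mulL2 (weightLp (volume.restrict Ω) α hS)) := by
  funext x
  rw [J, tikhonov, norm_mulL2_weightLp_sq hα, sqInt, sqInt, Measure.restrict_restrict hS.compl,
    Measure.restrict_restrict_of_subset Set.sdiff_subset, Set.sdiff_eq_compl_inter]

theorem regularization_stability_general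
    {n : ℕ} (Ω : Set (Fin n → ℝ))
    {Y : Type*} [NormedAddCommGroup Y] [InnerProductSpace ℝ Y] [CompleteSpace Y]
    (D : Set (Lp ℝ 2 (volume.restrict Ω))) (hD : D.Nonempty)
    (F : Lp ℝ 2 (volume.restrict Ω) → Y)
    (hFweak : ∀ (u : ℕ → Lp ℝ 2 (volume.restrict Ω))
      (x : Lp ℝ 2 (volume.restrict Ω)) (z : Y),
      (∀ k, u k ∈ D) → WeakConv u x → WeakConv (fun k => F (u k)) z →
        x ∈ D ∧ F x = z)
    (xstar : Lp ℝ 2 (volume.restrict Ω))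
    (α : ℝ) (hα : 0 < α)
    (S : Set (Fin n → ℝ)) (hSmeas : MeasurableSet S)
    (Sk : ℕ → Set (Fin n → ℝ)) (hSkmeas : ∀ k, MeasurableSet (Sk k))
    (hweights : Tendsto
      (fun k => eLpNorm (weight α (Sk k) - weight α S) 2 (volume.restrict Ω))
      atTop (𝓝 0))
    (yδ : Y)
    (xs : ℕ → Lp ℝ 2 (volume.restrict Ω))
    (hxs : ∀ k, IsMinimizer (J Ω F xstar α (Sk k) yδ) D (xs k)) :
    (∃ φ : ℕ → ℕ, StrictMono φ ∧
      ∃ xbar : Lp ℝ 2 (volume.restrict Ω), Tendsto (xs ∘ φ) atTop (𝓝 xbar)) ∧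
    (∀ (φ : ℕ → ℕ), StrictMono φ →
      ∀ xbar : Lp ℝ 2 (volume.restrict Ω), Tendsto (xs ∘ φ) atTop (𝓝 xbar) →
        IsMinimizer (J Ω F xstar α S yδ) D xbar) := by
  obtain ⟨x₁, hx₁⟩ := hD
  simp only [J_eq_tikhonov F xstar hα.le hSmeas, J_eq_tikhonov F xstar hα.le (hSkmeas _)] at hxs ⊢
  exact tikhonov_stability hFweak (fun k => isSymmetric_mulL2 _) (isSymmetric_mulL2 _)
    (tendsto_mulL2_weightLp hSkmeas hSmeas hweights) (lt_min (Real.sqrt_pos.2 hα) one_pos)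
    (fun k => mul_norm_le_norm_mulL2_weightLp (hSkmeas k)) hxs hx₁

/-- **Regularization stability** (Theorem A.2): if the weight functions
`f_{S_k,α}` converge to `f_{S,α}` in `L²(Ω)` and `x_k` minimizes
`J_{α,S_k,y^δ}` over `D(F)`, then `(x_k)` has a strongly convergent subsequence
in `L²(Ω)`, and every strong limit of a convergent subsequence of `(x_k)` is a
minimizer of `J_{α,S,y^δ}` over `D(F)`. -/
theorem regularization_stability
    {n : ℕ} (Ω : Set (Fin n → ℝ)) (hΩmeas : MeasurableSet Ω)
    (hΩbdd : Bornology.IsBounded Ω)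
    {Y : Type*} [NormedAddCommGroup Y] [InnerProductSpace ℝ Y] [CompleteSpace Y]
    (D : Set (Lp ℝ 2 (volume.restrict Ω))) (hD : D.Nonempty)
    (F : Lp ℝ 2 (volume.restrict Ω) → Y)
    (hFcont : ContinuousOn F D)
    (hFweak : ∀ (u : ℕ → Lp ℝ 2 (volume.restrict Ω))
      (x : Lp ℝ 2 (volume.restrict Ω)) (z : Y),
      (∀ k, u k ∈ D) → WeakConv u x → WeakConv (fun k => F (u k)) z →
        x ∈ D ∧ F x = z)
    (xstar : Lp ℝ 2 (volume.restrict Ω))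
    (α : ℝ) (hα : 0 < α)
    (S : Set (Fin n → ℝ)) (hSmeas : MeasurableSet S) (hSΩ : S ⊆ Ω)
    (Sk : ℕ → Set (Fin n → ℝ)) (hSkmeas : ∀ k, MeasurableSet (Sk k))
    (hSkΩ : ∀ k, Sk k ⊆ Ω)
    (hweights : Tendsto
      (fun k => eLpNorm (weight α (Sk k) - weight α S) 2 (volume.restrict Ω))
      atTop (𝓝 0))
    (yδ : Y)
    (xs : ℕ → Lp ℝ 2 (volume.restrict Ω))
    (hxs : ∀ k, IsMinimizer (J Ω F xstar α (Sk k) yδ) D (xs k)) :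
    (∃ φ : ℕ → ℕ, StrictMono φ ∧
      ∃ xbar : Lp ℝ 2 (volume.restrict Ω), Tendsto (xs ∘ φ) atTop (𝓝 xbar)) ∧
    (∀ (φ : ℕ → ℕ), StrictMono φ →
      ∀ xbar : Lp ℝ 2 (volume.restrict Ω), Tendsto (xs ∘ φ) atTop (𝓝 xbar) →
        IsMinimizer (J Ω F xstar α S yδ) D xbar) :=
  regularization_stability_general Ω D hD F hFweak xstar α hα S hSmeas Sk hSkmeas hweights yδ xs hxs
end
end

section
/- (Localization of minimizers.) Let y ∈ Y, let x† ∈ D(F) satisfy F(x†) = y and x† = 0 a.e. on Ω∖S, and assume x* = 0 a.e. on Ω∖S. Let α : (0,∞) → (0,∞) satisfy α(δ) → 0 and δ²/α(δ) → 0 as δ → 0. Then for every ρ > 2‖x† − x*‖_{L²} there exists δ₀ > 0 such that for all 0 < δ ≤ δ₀, all y^δ ∈ Y with ‖y − y^δ‖_Y ≤ δ, and every minimizer x of J_{α(δ),S,y^δ} over D(F), one has ‖x − x†‖_{L²} < ρ. -/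
/-!
Since `x† − x*` vanishes off `S`, testing the minimality of `x` against `x†` gives, once `α ≤ 1`,
`α‖x − x*‖² ≤ α‖x − x*‖_{S⁺}² + ‖x − x*‖_{S⁻}² ≤ J(x) ≤ J(x†) = ‖y − y^δ‖² + α‖x† − x*‖²`.
Hence `‖x − x*‖² ≤ δ²/α + ‖x† − x*‖²`, and `δ²/α → 0` makes the right side smaller than
`(ρ − ‖x† − x*‖)²` for small `δ`; the triangle inequality through `x*` finishes.
-/

open MeasureTheory Filter
open scoped RealInnerProductSpace ENNReal Topology

noncomputable section

/-- `x = 0` almost everywhere on `Ω ∖ S`. -/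
def ZeroOff {n : ℕ} (Ω S : Set (Fin n → ℝ))
    (x : Lp ℝ 2 (volume.restrict Ω)) : Prop :=
  ∀ᵐ t ∂((volume.restrict Ω).restrict (Ω \ S)), x t = 0

/-- `xdag` is an `x*`-`S`-minimum-norm solution of `F(x) = y`: it belongs to
`D(F)`, solves `F(xdag) = y`, vanishes a.e. on `Ω ∖ S`, and minimizes
`‖x − x*‖_{L²}` among all such solutions. -/
def IsMNS {n : ℕ} (Ω : Set (Fin n → ℝ)) {Y : Type*} [NormedAddCommGroup Y]
    [InnerProductSpace ℝ Y]
    (D : Set (Lp ℝ 2 (volume.restrict Ω))) (F : Lp ℝ 2 (volume.restrict Ω) → Y)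
    (xstar : Lp ℝ 2 (volume.restrict Ω)) (S : Set (Fin n → ℝ)) (y : Y)
    (xdag : Lp ℝ 2 (volume.restrict Ω)) : Prop :=
  xdag ∈ D ∧ F xdag = y ∧ ZeroOff Ω S xdag ∧
    ∀ x ∈ D, F x = y → ZeroOff Ω S x → ‖xdag - xstar‖ ≤ ‖x - xstar‖

namespace MeasureTheory.L2

variable {β : Type*} [MeasurableSpace β] {μ : Measure β}

theorem norm_sq_eq_integral_sq (f : Lp ℝ 2 μ) : ‖f‖ ^ 2 = ∫ t, f t ^ 2 ∂μ := by
  rw [← real_inner_self_eq_norm_sq, inner_def]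
  simp [pow_two]

theorem integrable_sq (f : Lp ℝ 2 μ) : Integrable (fun t => f t ^ 2) μ := by
  simpa [RCLike.inner_apply, pow_two] using integrable_inner (𝕜 := ℝ) f f

theorem setIntegral_sq_add_compl {S : Set β} (hS : MeasurableSet S) (f : Lp ℝ 2 μ) :
    ∫ t in S, f t ^ 2 ∂μ + ∫ t in Sᶜ, f t ^ 2 ∂μ = ‖f‖ ^ 2 := by
  rw [norm_sq_eq_integral_sq, integral_add_compl hS (integrable_sq f)]

end MeasureTheory.L2

section SqInt

variable {n : ℕ} {Ω S : Set (Fin n → ℝ)}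

theorem sqInt_nonneg (T : Set (Fin n → ℝ)) (v : Lp ℝ 2 (volume.restrict Ω)) :
    0 ≤ sqInt Ω T v :=
  integral_nonneg fun _ => sq_nonneg _

theorem sqInt_add_sqInt_diff (hΩ : MeasurableSet Ω) (hS : MeasurableSet S)
    (v : Lp ℝ 2 (volume.restrict Ω)) :
    sqInt Ω S v + sqInt Ω (Ω \ S) v = ‖v‖ ^ 2 := by
  have hcompl : (volume.restrict Ω).restrict (Ω \ S) = (volume.restrict Ω).restrict Sᶜ := by
    rw [Measure.restrict_restrict' hΩ, Measure.restrict_restrict' hΩ, Set.sdiff_eq_compl_inter,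
      Set.inter_assoc, Set.inter_self]
  rw [sqInt, sqInt, hcompl, L2.setIntegral_sq_add_compl hS]

theorem sqInt_diff_sub_eq_zero {a b : Lp ℝ 2 (volume.restrict Ω)}
    (ha : ZeroOff Ω S a) (hb : ZeroOff Ω S b) : sqInt Ω (Ω \ S) (a - b) = 0 := by
  refine integral_eq_zero_of_ae ?_
  filter_upwards [ae_restrict_of_ae (Lp.coeFn_sub a b), ha, hb] with t hsub hat hbt
  rw [hsub, Pi.sub_apply, hat, hbt]
  norm_num

end SqInt

section Tikhonov

variable {n : ℕ} {Ω S : Set (Fin n → ℝ)} {Y : Type*} [NormedAddCommGroup Y]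
  [InnerProductSpace ℝ Y] {F : Lp ℝ 2 (volume.restrict Ω) → Y}
  {xstar : Lp ℝ 2 (volume.restrict Ω)} {a : ℝ} {z : Y}

theorem J_eq_of_zeroOff (hΩ : MeasurableSet Ω) (hS : MeasurableSet S)
    {x : Lp ℝ 2 (volume.restrict Ω)} (hx : ZeroOff Ω S x) (hxstar : ZeroOff Ω S xstar) :
    J Ω F xstar a S z x = ‖F x - z‖ ^ 2 + a * ‖x - xstar‖ ^ 2 := by
  have hoff := sqInt_diff_sub_eq_zero hx hxstar
  have hsplit := sqInt_add_sqInt_diff hΩ hS (x - xstar)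
  rw [J, hoff, add_zero, ← hsplit, hoff, add_zero]

theorem mul_norm_sq_le_J (hΩ : MeasurableSet Ω) (hS : MeasurableSet S) (ha1 : a ≤ 1)
    (x : Lp ℝ 2 (volume.restrict Ω)) :
    a * ‖x - xstar‖ ^ 2 ≤ J Ω F xstar a S z x := by
  rw [J, ← sqInt_add_sqInt_diff hΩ hS]
  have hoff := sqInt_nonneg (Ω \ S) (x - xstar)
  nlinarith [sq_nonneg ‖F x - z‖]

theorem IsMinimizer.norm_sub_sq_le (hΩ : MeasurableSet Ω) (hS : MeasurableSet S) (ha0 : 0 < a)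
    (ha1 : a ≤ 1) {D : Set (Lp ℝ 2 (volume.restrict Ω))} {x xdag : Lp ℝ 2 (volume.restrict Ω)}
    (hx : IsMinimizer (J Ω F xstar a S z) D x) (hxdagD : xdag ∈ D)
    (hxdag : ZeroOff Ω S xdag) (hxstar : ZeroOff Ω S xstar) :
    ‖x - xstar‖ ^ 2 ≤ ‖F xdag - z‖ ^ 2 / a + ‖xdag - xstar‖ ^ 2 := by
  have hJ : a * ‖x - xstar‖ ^ 2 ≤ ‖F xdag - z‖ ^ 2 + a * ‖xdag - xstar‖ ^ 2 :=
    calc a * ‖x - xstar‖ ^ 2 ≤ J Ω F xstar a S z x := mul_norm_sq_le_J hΩ hS ha1 x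
      _ ≤ J Ω F xstar a S z xdag := hx.2 xdag hxdagD
      _ = _ := J_eq_of_zeroOff hΩ hS hxdag hxstar
  rw [div_add' _ _ _ ha0.ne', le_div_iff₀ ha0]
  linarith

end Tikhonov

theorem localization_of_minimizers_general
    {n : ℕ} (Ω : Set (Fin n → ℝ)) (hΩmeas : MeasurableSet Ω)
    {Y : Type*} [NormedAddCommGroup Y] [InnerProductSpace ℝ Y]
    (D : Set (Lp ℝ 2 (volume.restrict Ω)))
    (F : Lp ℝ 2 (volume.restrict Ω) → Y)
    (xstar : Lp ℝ 2 (volume.restrict Ω))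
    (S : Set (Fin n → ℝ)) (hSmeas : MeasurableSet S)
    (hxstar : ZeroOff Ω S xstar)
    (y : Y)
    (xdag : Lp ℝ 2 (volume.restrict Ω)) (hxdagD : xdag ∈ D)
    (hxdagF : F xdag = y) (hxdag0 : ZeroOff Ω S xdag)
    (α : ℝ → ℝ) (hαpos : ∀ δ > (0 : ℝ), 0 < α δ)
    (hα0 : Tendsto α (𝓝[>] (0 : ℝ)) (𝓝 0))
    (hδ2α : Tendsto (fun δ => δ ^ 2 / α δ) (𝓝[>] (0 : ℝ)) (𝓝 0)) :
    ∀ ρ > 2 * ‖xdag - xstar‖, ∃ δ₀ > (0 : ℝ), ∀ δ : ℝ, 0 < δ → δ ≤ δ₀ →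
      ∀ yδ : Y, ‖y - yδ‖ ≤ δ →
        ∀ x : Lp ℝ 2 (volume.restrict Ω),
          IsMinimizer (J Ω F xstar (α δ) S yδ) D x → ‖x - xdag‖ < ρ := by
  intro ρ hρ
  set b := ‖xdag - xstar‖
  have hb : 0 ≤ b := norm_nonneg _
  have hgap : 0 < (ρ - b) ^ 2 - b ^ 2 := by nlinarith
  obtain ⟨δ₀, hδ₀, hsmall⟩ := mem_nhdsGT_iff_exists_Ioc_subset.1
    ((hα0.eventually_lt_const one_pos).and (hδ2α.eventually_lt_const hgap))
  refine ⟨δ₀, hδ₀, fun δ hδ hδle yδ hyδ x hx => ?_⟩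
  obtain ⟨hα1, hδα⟩ := hsmall ⟨hδ, hδle⟩
  have hnear : ‖x - xstar‖ ^ 2 < (ρ - b) ^ 2 :=
    calc ‖x - xstar‖ ^ 2 ≤ ‖F xdag - yδ‖ ^ 2 / α δ + b ^ 2 :=
          hx.norm_sub_sq_le hΩmeas hSmeas (hαpos δ hδ) hα1.le hxdagD hxdag0 hxstar
      _ ≤ δ ^ 2 / α δ + b ^ 2 := by
          rw [hxdagF]
          gcongr
          exact (hαpos δ hδ).le
      _ < (ρ - b) ^ 2 := by linarith
  calc ‖x - xdag‖ ≤ ‖x - xstar‖ + ‖xstar - xdag‖ := norm_sub_le_norm_sub_add_norm_sub x xstar xdag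
    _ = ‖x - xstar‖ + b := by rw [norm_sub_rev xstar xdag]
    _ < ρ := by linarith [lt_of_pow_lt_pow_left₀ 2 (by linarith) hnear]

/-- **Localization of minimizers**: with `α(δ) → 0` and `δ²/α(δ) → 0` as
`δ → 0⁺`, for every `ρ > 2‖x† − x*‖` there is `δ₀ > 0` such that for all
`0 < δ ≤ δ₀`, all data `y^δ` with `‖y − y^δ‖ ≤ δ`, and every minimizer `x` of
`J_{α(δ),S,y^δ}` over `D(F)`, one has `‖x − x†‖ < ρ`. -/
theorem localization_of_minimizers
    {n : ℕ} (Ω : Set (Fin n → ℝ)) (hΩmeas : MeasurableSet Ω)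
    (hΩbdd : Bornology.IsBounded Ω)
    {Y : Type*} [NormedAddCommGroup Y] [InnerProductSpace ℝ Y] [CompleteSpace Y]
    (D : Set (Lp ℝ 2 (volume.restrict Ω))) (hD : D.Nonempty)
    (F : Lp ℝ 2 (volume.restrict Ω) → Y)
    (hFcont : ContinuousOn F D)
    (hFweak : ∀ (u : ℕ → Lp ℝ 2 (volume.restrict Ω))
      (x : Lp ℝ 2 (volume.restrict Ω)) (z : Y),
      (∀ k, u k ∈ D) → WeakConv u x → WeakConv (fun k => F (u k)) z →
        x ∈ D ∧ F x = z)
    (xstar : Lp ℝ 2 (volume.restrict Ω))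
    (S : Set (Fin n → ℝ)) (hSmeas : MeasurableSet S) (hSΩ : S ⊆ Ω)
    (hxstar : ZeroOff Ω S xstar)
    (y : Y)
    (xdag : Lp ℝ 2 (volume.restrict Ω)) (hxdagD : xdag ∈ D)
    (hxdagF : F xdag = y) (hxdag0 : ZeroOff Ω S xdag)
    (α : ℝ → ℝ) (hαpos : ∀ δ > (0 : ℝ), 0 < α δ)
    (hα0 : Tendsto α (𝓝[>] (0 : ℝ)) (𝓝 0))
    (hδ2α : Tendsto (fun δ => δ ^ 2 / α δ) (𝓝[>] (0 : ℝ)) (𝓝 0)) :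
    ∀ ρ > 2 * ‖xdag - xstar‖, ∃ δ₀ > (0 : ℝ), ∀ δ : ℝ, 0 < δ → δ ≤ δ₀ →
      ∀ yδ : Y, ‖y - yδ‖ ≤ δ →
        ∀ x : Lp ℝ 2 (volume.restrict Ω),
          IsMinimizer (J Ω F xstar (α δ) S yδ) D x → ‖x - xdag‖ < ρ :=
  localization_of_minimizers_general Ω hΩmeas D F xstar S hSmeas hxstar y xdag hxdagD hxdagF hxdag0
    α hαpos hα0 hδ2α
end
end
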